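/- arXiv:1008.5231 — 3 statements merged into one kernel-verified Lean document; each statement's English description precedes it below -/
import Mathlib

section
/- Let T₁, T₂ : H → H be η₁- and η₂-attracting quasi-nonexpansive mappings respectively, with Fix(T₁) ∩ Fix(T₂) ≠ ∅. Then the composition T₁T₂ is (η₁η₂/(η₁+η₂))-attracting quasi-nonexpansive and Fix(T₁T₂) = Fix(T₁) ∩ Fix(T₂). -/
open scoped RealInnerProductSpace

/-- The composition of an `η₁`- and an `η₂`-attracting quasi-nonexpansive mapping,
whose fixed point sets intersect, is `η₁η₂/(η₁+η₂)`-attracting quasi-nonexpansive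
with fixed point set equal to the intersection of the fixed point sets. -/
theorem composition_attracting_quasiNonexpansive
    {H : Type*} [NormedAddCommGroup H] [InnerProductSpace ℝ H]
    (T₁ T₂ : H → H) (η₁ η₂ : ℝ) (hη₁ : 0 < η₁) (hη₂ : 0 < η₂)
    (hne₁ : {v : H | T₁ v = v}.Nonempty) (hne₂ : {v : H | T₂ v = v}.Nonempty)
    (hint : ({v : H | T₁ v = v} ∩ {v : H | T₂ v = v}).Nonempty)
    (hatt₁ : ∀ x v : H, T₁ v = v → η₁ * ‖x - T₁ x‖ ^ 2 ≤ ‖x - v‖ ^ 2 - ‖T₁ x - v‖ ^ 2)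
    (hatt₂ : ∀ x v : H, T₂ v = v → η₂ * ‖x - T₂ x‖ ^ 2 ≤ ‖x - v‖ ^ 2 - ‖T₂ x - v‖ ^ 2) :
    (∀ x : H, ∀ v ∈ {v : H | T₁ v = v} ∩ {v : H | T₂ v = v},
      (η₁ * η₂ / (η₁ + η₂)) * ‖x - T₁ (T₂ x)‖ ^ 2 ≤ ‖x - v‖ ^ 2 - ‖T₁ (T₂ x) - v‖ ^ 2) ∧
    {x : H | T₁ (T₂ x) = x} = {v : H | T₁ v = v} ∩ {v : H | T₂ v = v} := by
  constructor
  · rintro x v ⟨hv1, hv2⟩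
    have h2 := hatt₂ x v hv2
    have h1 := hatt₁ (T₂ x) v hv1
    set a := ‖x - T₂ x‖ with ha
    set b := ‖T₂ x - T₁ (T₂ x)‖ with hb
    set c := ‖x - T₁ (T₂ x)‖ with hc
    have hab : c ≤ a + b := by
      have : x - T₁ (T₂ x) = (x - T₂ x) + (T₂ x - T₁ (T₂ x)) := by abel
      rw [hc, this]; exact norm_add_le _ _
    have hc0 : (0:ℝ) ≤ c := norm_nonneg _
    have ha0 : (0:ℝ) ≤ a := norm_nonneg _
    have hb0 : (0:ℝ) ≤ b := norm_nonneg _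
    have key : (η₁ * η₂ / (η₁ + η₂)) * c ^ 2 ≤ η₂ * a ^ 2 + η₁ * b ^ 2 := by
      have hcsq : c ^ 2 ≤ (a + b) ^ 2 := by nlinarith
      rw [div_mul_eq_mul_div, div_le_iff₀ (by linarith)]
      nlinarith [sq_nonneg (η₂ * a - η₁ * b), mul_pos hη₁ hη₂,
        mul_le_mul_of_nonneg_left hcsq (le_of_lt (mul_pos hη₁ hη₂))]
    linarith
  · ext x
    simp only [Set.mem_setOf_eq, Set.mem_inter_iff]
    constructor
    · intro hx
      obtain ⟨v, hv1, hv2⟩ := hint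
      have h2 := hatt₂ x v hv2
      have h1 := hatt₁ (T₂ x) v hv1
      rw [hx] at h1
      have hfix : T₂ x = x := by
        rw [norm_sub_rev] at h1
        have hpos : (0:ℝ) < η₁ + η₂ := by linarith
        have hsum : (η₁ + η₂) * ‖x - T₂ x‖ ^ 2 ≤ 0 := by ring_nf; nlinarith
        have h0 : ‖x - T₂ x‖ ^ 2 ≤ 0 := by nlinarith [hsum]
        have : ‖x - T₂ x‖ = 0 := by
          have := le_antisymm h0 (sq_nonneg _)
          exact pow_eq_zero_iff two_ne_zero |>.mp this
        have := norm_eq_zero.mp this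
        have := sub_eq_zero.mp this
        exact this.symm
      rw [hfix] at hx
      exact ⟨hx, hfix⟩
    · rintro ⟨h1, h2⟩
      rw [h2, h1]
end

section
/- Consider the APSM iterate u_{n+1} := T(uₙ − λₙ (Θₙ(uₙ)/‖Θₙ′(uₙ)‖²) Θₙ′(uₙ)) when Θₙ′(uₙ) ≠ 0, and u_{n+1} := T(uₙ) otherwise, where T is quasi-nonexpansive, Θₙ : H → [0,∞) convex continuous, λₙ ∈ [ε, 2−ε], and Ω := Fix(T) ∩ ⋂ₙ lev₀Θₙ ≠ ∅. Then for every v ∈ Ω and every n: ‖u_{n+1} − v‖² ≤ ‖uₙ − v‖² − λₙ(2−λₙ) Θₙ²(uₙ)/‖Θₙ′(uₙ)‖² (with the convention 0/0 = 0). In particular ‖u_{n+1} − v‖ ≤ ‖uₙ − v‖, the limit lim_n ‖uₙ − v‖ exists, and lim_{n→∞} Θₙ(uₙ)/‖Θₙ′(uₙ)‖ = 0. -/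
open scoped RealInnerProductSpace
open Filter Topology

/-- Basic properties of the APSM iteration
`u_{n+1} = T(uₙ - λₙ (Θₙ(uₙ)/‖Θₙ′(uₙ)‖²) Θₙ′(uₙ))` (and `u_{n+1} = T(uₙ)` when
`Θₙ′(uₙ) = 0`) with `T` quasi-nonexpansive, `λₙ ∈ [ε, 2-ε]` and
`Ω = Fix(T) ∩ ⋂ₙ lev₀Θₙ ≠ ∅`: for every `v ∈ Ω`,
`‖u_{n+1} - v‖² ≤ ‖uₙ - v‖² - λₙ(2-λₙ)Θₙ²(uₙ)/‖Θₙ′(uₙ)‖²`, hence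
`‖u_{n+1} - v‖ ≤ ‖uₙ - v‖`, `lim ‖uₙ - v‖` exists, and
`Θₙ(uₙ)/‖Θₙ′(uₙ)‖ → 0` (with the convention `0/0 = 0`). -/
theorem apsm_monotonicity_and_fraction_to_zero
    {H : Type*} [NormedAddCommGroup H] [InnerProductSpace ℝ H]
    (T : H → H) (hTfix : {v : H | T v = v}.Nonempty)
    (hT : ∀ x : H, ∀ v ∈ {v : H | T v = v}, ‖T x - v‖ ≤ ‖x - v‖)
    (Θ : ℕ → H → ℝ)
    (hΘnn : ∀ n x, 0 ≤ Θ n x)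
    (hΘconv : ∀ n, ConvexOn ℝ Set.univ (Θ n))
    (hΘcont : ∀ n, Continuous (Θ n))
    (u : ℕ → H) (g : ℕ → H)
    (hg : ∀ (n : ℕ) (y : H), ⟪g n, y - u n⟫ + Θ n (u n) ≤ Θ n y)
    (ε : ℝ) (hε : ε ∈ Set.Ioc (0 : ℝ) 1)
    (lam : ℕ → ℝ) (hlam : ∀ n, lam n ∈ Set.Icc ε (2 - ε))
    (hrec : ∀ n, g n ≠ 0 →
      u (n + 1) = T (u n - (lam n * Θ n (u n) / ‖g n‖ ^ 2) • g n))
    (hrec0 : ∀ n, g n = 0 → u (n + 1) = T (u n))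
    (Ω : Set H) (hΩ : Ω = {v : H | T v = v} ∩ ⋂ n : ℕ, {v : H | Θ n v = 0})
    (hΩne : Ω.Nonempty) :
    (∀ v ∈ Ω, ∀ n : ℕ,
      ‖u (n + 1) - v‖ ^ 2 ≤
        ‖u n - v‖ ^ 2 - lam n * (2 - lam n) * (Θ n (u n)) ^ 2 / ‖g n‖ ^ 2) ∧
    (∀ v ∈ Ω, ∀ n : ℕ, ‖u (n + 1) - v‖ ≤ ‖u n - v‖) ∧
    (∀ v ∈ Ω, ∃ c : ℝ, Tendsto (fun n => ‖u n - v‖) atTop (𝓝 c)) ∧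
    Tendsto (fun n => Θ n (u n) / ‖g n‖) atTop (𝓝 0) := by
  obtain ⟨hε0, hε1⟩ := hε
  -- facts about Ω
  have hvfix : ∀ v ∈ Ω, T v = v := by
    intro v hv; rw [hΩ] at hv; exact hv.1
  have hvΘ : ∀ v ∈ Ω, ∀ n, Θ n v = 0 := by
    intro v hv n; rw [hΩ] at hv
    exact Set.mem_iInter.mp hv.2 n
  have hsub : ∀ v ∈ Ω, ∀ n, Θ n (u n) ≤ ⟪g n, u n - v⟫ := by
    intro v hv n
    have h1 := hg n v
    rw [hvΘ v hv n, show v - u n = -(u n - v) from (neg_sub _ _).symm,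
      inner_neg_right] at h1
    linarith
  -- part 1
  have key : ∀ v ∈ Ω, ∀ n : ℕ,
      ‖u (n + 1) - v‖ ^ 2 ≤
        ‖u n - v‖ ^ 2 - lam n * (2 - lam n) * (Θ n (u n)) ^ 2 / ‖g n‖ ^ 2 := by
    intro v hv n
    have hθ0 : 0 ≤ Θ n (u n) := hΘnn n (u n)
    obtain ⟨hl1, hl2⟩ := hlam n
    have hl0 : 0 < lam n := lt_of_lt_of_le hε0 hl1
    by_cases h0 : g n = 0
    · have hθ : Θ n (u n) = 0 := le_antisymm (le_trans (hsub v hv n) (by simp [h0])) hθ0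
      rw [hrec0 n h0, hθ]
      have := hT (u n) v (hvfix v hv)
      have h2 : ‖T (u n) - v‖ ^ 2 ≤ ‖u n - v‖ ^ 2 :=
        pow_le_pow_left₀ (norm_nonneg _) this 2
      simpa using h2
    · have hG : (0:ℝ) < ‖g n‖ ^ 2 := pow_pos (norm_pos_iff.mpr h0) 2
      set θ := Θ n (u n) with hθdef
      set α := lam n * θ / ‖g n‖ ^ 2 with hα
      have hα0 : 0 ≤ α := div_nonneg (mul_nonneg hl0.le hθ0) hG.le
      rw [hrec n h0]
      have step1 : ‖T (u n - α • g n) - v‖ ^ 2 ≤ ‖u n - α • g n - v‖ ^ 2 :=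
        pow_le_pow_left₀ (norm_nonneg _) (hT _ v (hvfix v hv)) 2
      have expand : ‖u n - α • g n - v‖ ^ 2 =
          ‖u n - v‖ ^ 2 - 2 * α * ⟪g n, u n - v⟫ + α ^ 2 * ‖g n‖ ^ 2 := by
        rw [show u n - α • g n - v = (u n - v) - α • g n by abel]
        rw [@norm_sub_sq_real, real_inner_smul_right, norm_smul, mul_pow]
        rw [real_inner_comm]
        simp [abs_of_nonneg hα0]
        ring
      have step2 : ‖u n - v‖ ^ 2 - 2 * α * ⟪g n, u n - v⟫ + α ^ 2 * ‖g n‖ ^ 2 ≤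
          ‖u n - v‖ ^ 2 - 2 * α * θ + α ^ 2 * ‖g n‖ ^ 2 := by
        have := hsub v hv n
        nlinarith
      have step3 : ‖u n - v‖ ^ 2 - 2 * α * θ + α ^ 2 * ‖g n‖ ^ 2 =
          ‖u n - v‖ ^ 2 - lam n * (2 - lam n) * θ ^ 2 / ‖g n‖ ^ 2 := by
        rw [hα]
        field_simp
        ring
      calc ‖T (u n - α • g n) - v‖ ^ 2 ≤ _ := step1
        _ = _ := expand
        _ ≤ _ := step2
        _ = _ := step3
  have hlamprod : ∀ n, ε ^ 2 ≤ lam n * (2 - lam n) := by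
    intro n
    obtain ⟨hl1, hl2⟩ := hlam n
    nlinarith
  have hterm0 : ∀ n, 0 ≤ lam n * (2 - lam n) * (Θ n (u n)) ^ 2 / ‖g n‖ ^ 2 := by
    intro n
    have := hlamprod n
    have : 0 ≤ lam n * (2 - lam n) := le_trans (by positivity) this
    positivity
  -- part 2
  have mono : ∀ v ∈ Ω, ∀ n : ℕ, ‖u (n + 1) - v‖ ≤ ‖u n - v‖ := by
    intro v hv n
    have h1 := key v hv n
    have h2 := hterm0 n
    have : ‖u (n + 1) - v‖ ^ 2 ≤ ‖u n - v‖ ^ 2 := by linarith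
    have h3 := Real.sqrt_le_sqrt this
    rwa [Real.sqrt_sq (norm_nonneg _), Real.sqrt_sq (norm_nonneg _)] at h3
  -- part 3
  have anti : ∀ v ∈ Ω, Antitone (fun n => ‖u n - v‖) := by
    intro v hv
    exact antitone_nat_of_succ_le (fun n => mono v hv n)
  have lim : ∀ v ∈ Ω, ∃ c : ℝ, Tendsto (fun n => ‖u n - v‖) atTop (𝓝 c) := by
    intro v hv
    refine ⟨⨅ n, ‖u n - v‖, tendsto_atTop_ciInf (anti v hv) ?_⟩
    exact ⟨0, by rintro x ⟨n, rfl⟩; exact norm_nonneg _⟩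
  refine ⟨key, mono, lim, ?_⟩
  -- part 4
  obtain ⟨v, hv⟩ := hΩne
  obtain ⟨c, hc⟩ := lim v hv
  have hc' : Tendsto (fun n => ‖u (n + 1) - v‖) atTop (𝓝 c) :=
    hc.comp (tendsto_add_atTop_nat 1)
  have hdiff : Tendsto (fun n => ‖u n - v‖ ^ 2 - ‖u (n + 1) - v‖ ^ 2) atTop (𝓝 0) := by
    have := (hc.pow 2).sub (hc'.pow 2)
    simpa using this
  have hsqz : Tendsto (fun n => (Θ n (u n) / ‖g n‖) ^ 2) atTop (𝓝 0) := by
    apply squeeze_zero (fun n => by positivity)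
      (g := fun n => (1 / ε ^ 2) * (‖u n - v‖ ^ 2 - ‖u (n + 1) - v‖ ^ 2))
    · intro n
      have hkey := key v hv n
      have hb : lam n * (2 - lam n) * (Θ n (u n)) ^ 2 / ‖g n‖ ^ 2 ≤
          ‖u n - v‖ ^ 2 - ‖u (n + 1) - v‖ ^ 2 := by linarith
      have hfrac : (Θ n (u n) / ‖g n‖) ^ 2 = (Θ n (u n)) ^ 2 / ‖g n‖ ^ 2 := by
        rw [div_pow]
      rw [hfrac]
      have hm := mono v hv n
      have hX : 0 ≤ ‖u n - v‖ ^ 2 - ‖u (n + 1) - v‖ ^ 2 := by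
        nlinarith [norm_nonneg (u (n + 1) - v)]
      by_cases h0 : g n = 0
      · simp only [h0, norm_zero, div_zero, ne_eq, OfNat.ofNat_ne_zero,
          not_false_eq_true, zero_pow]
        exact mul_nonneg (by positivity) hX
      · have hG : (0:ℝ) < ‖g n‖ ^ 2 := pow_pos (norm_pos_iff.mpr h0) 2
        have h1 : ε ^ 2 * ((Θ n (u n)) ^ 2 / ‖g n‖ ^ 2) ≤
            lam n * (2 - lam n) * (Θ n (u n)) ^ 2 / ‖g n‖ ^ 2 := by
          rw [mul_div_assoc']
          exact (div_le_div_iff_of_pos_right hG).mpr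
            (by nlinarith [hlamprod n, sq_nonneg (Θ n (u n))])
        have hε2 : (0:ℝ) < ε ^ 2 := by positivity
        rw [← mul_le_mul_iff_right₀ hε2]
        have heq : ε ^ 2 * (1 / ε ^ 2 * (‖u n - v‖ ^ 2 - ‖u (n + 1) - v‖ ^ 2)) =
            ‖u n - v‖ ^ 2 - ‖u (n + 1) - v‖ ^ 2 := by field_simp
        rw [heq]
        exact h1.trans hb
    · have := hdiff.const_mul (1 / ε ^ 2)
      simpa using this
  have hnn : ∀ n, 0 ≤ Θ n (u n) / ‖g n‖ := fun n => div_nonneg (hΘnn n (u n)) (norm_nonneg _)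
  have := (Real.continuous_sqrt.tendsto 0).comp hsqz
  simp only [Real.sqrt_zero, Function.comp] at this
  convert this using 2 with n
  · exact (Real.sqrt_sq (hnn n)).symm
end

section
/- Under the setting of the previous statement, if additionally the sequence of subgradients (Θₙ′(uₙ))ₙ is bounded by D > 0, then lim_{n→∞} Θₙ(uₙ) = 0. -/
open scoped RealInnerProductSpace
open Filter Topology

/-- Asymptotic minimization by the APSM: under the setting of the monotonicity
theorem, if additionally the subgradients `(Θₙ′(uₙ))ₙ` are bounded by `D > 0`,
then `Θₙ(uₙ) → 0`. -/
theorem apsm_asymptotic_minimization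
    {H : Type*} [NormedAddCommGroup H] [InnerProductSpace ℝ H]
    (T : H → H) (hTfix : {v : H | T v = v}.Nonempty)
    (hT : ∀ x : H, ∀ v ∈ {v : H | T v = v}, ‖T x - v‖ ≤ ‖x - v‖)
    (Θ : ℕ → H → ℝ)
    (hΘnn : ∀ n x, 0 ≤ Θ n x)
    (hΘconv : ∀ n, ConvexOn ℝ Set.univ (Θ n))
    (hΘcont : ∀ n, Continuous (Θ n))
    (u : ℕ → H) (g : ℕ → H)
    (hg : ∀ (n : ℕ) (y : H), ⟪g n, y - u n⟫ + Θ n (u n) ≤ Θ n y)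
    (ε : ℝ) (hε : ε ∈ Set.Ioc (0 : ℝ) 1)
    (lam : ℕ → ℝ) (hlam : ∀ n, lam n ∈ Set.Icc ε (2 - ε))
    (hrec : ∀ n, g n ≠ 0 →
      u (n + 1) = T (u n - (lam n * Θ n (u n) / ‖g n‖ ^ 2) • g n))
    (hrec0 : ∀ n, g n = 0 → u (n + 1) = T (u n))
    (Ω : Set H) (hΩ : Ω = {v : H | T v = v} ∩ ⋂ n : ℕ, {v : H | Θ n v = 0})
    (hΩne : Ω.Nonempty)
    (D : ℝ) (hD : 0 < D) (hbdd : ∀ n, ‖g n‖ ≤ D) :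
    Tendsto (fun n => Θ n (u n)) atTop (𝓝 0) := by
  obtain ⟨w, hw⟩ := hΩne
  rw [hΩ] at hw
  obtain ⟨hwT, hwΘ⟩ := hw
  have hwT' : T w = w := hwT
  have hwΘ' : ∀ n, Θ n w = 0 := by
    intro n
    have := hwΘ
    simp only [Set.mem_iInter, Set.mem_setOf_eq] at this
    exact this n
  obtain ⟨hε0, hε1⟩ := hε
  set a : ℕ → ℝ := fun n => ‖u n - w‖ ^ 2 with ha
  set c : ℝ := ε * (2 - ε) / D ^ 2 with hc
  have hcpos : 0 < c := by
    apply div_pos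
    · nlinarith
    · positivity
  have key : ∀ n, c * (Θ n (u n)) ^ 2 ≤ a n - a (n + 1) := by
    intro n
    obtain ⟨hl1, hl2⟩ := hlam n
    by_cases hg0 : g n = 0
    · have hΘ0 : Θ n (u n) = 0 := by
        have h1 := hg n w
        rw [hg0] at h1
        simp only [inner_zero_left, zero_add] at h1
        have := hΘnn n (u n)
        have := hwΘ' n
        linarith
      have hle : ‖u (n + 1) - w‖ ≤ ‖u n - w‖ := by
        rw [hrec0 n hg0]; exact hT (u n) w hwT
      have : a (n + 1) ≤ a n :=
        pow_le_pow_left₀ (norm_nonneg _) hle 2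
      rw [hΘ0]
      simpa using this
    · have hG : 0 < ‖g n‖ := norm_pos_iff.mpr hg0
      set θ := Θ n (u n) with hθ
      have hθnn : 0 ≤ θ := hΘnn n (u n)
      set L := lam n with hL
      set t : ℝ := L * θ / ‖g n‖ ^ 2 with hT2
      have htnn : 0 ≤ t := by
        apply div_nonneg (mul_nonneg (by linarith) hθnn) (by positivity)
      -- subgradient inequality at w
      have hsub : θ ≤ ⟪g n, u n - w⟫ := by
        have h1 := hg n w
        rw [hwΘ' n] at h1
        have h2 : ⟪g n, w - u n⟫ = -⟪g n, u n - w⟫ := by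
          rw [← inner_neg_right, neg_sub]
        linarith [h1, h2.symm ▸ h1]
      -- norm expansion
      have hexp : ‖u n - t • g n - w‖ ^ 2
          = a n - 2 * (t * ⟪g n, u n - w⟫) + t ^ 2 * ‖g n‖ ^ 2 := by
        have h3 : u n - t • g n - w = (u n - w) - t • g n := by abel
        rw [h3, @norm_sub_sq_real, real_inner_smul_right, real_inner_comm,
          norm_smul]
        simp [mul_pow, ha]
      have hstep : a (n + 1) ≤ ‖u n - t • g n - w‖ ^ 2 := by
        show ‖u (n + 1) - w‖ ^ 2 ≤ _
        rw [hrec n hg0]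
        exact pow_le_pow_left₀ (norm_nonneg _)
          (hT (u n - t • g n) w hwT) 2
      have hgD : ‖g n‖ ^ 2 ≤ D ^ 2 := pow_le_pow_left₀ (norm_nonneg _) (hbdd n) 2
      have ht2 : t ^ 2 * ‖g n‖ ^ 2 = L ^ 2 * θ ^ 2 / ‖g n‖ ^ 2 := by
        field_simp [hT2]
        rw [hT2, div_pow, div_mul_eq_mul_div, div_eq_iff (pow_ne_zero 2 (pow_ne_zero 2 hG.ne'))]
        ring
      have h2t : 2 * (t * θ) = 2 * L * θ ^ 2 / ‖g n‖ ^ 2 := by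
        field_simp [hT2]
        rw [hT2, div_mul_eq_mul_div, div_mul_eq_mul_div, mul_div_cancel_right₀ _ (pow_ne_zero 2 hG.ne')]
        ring
      have hmono : 2 * (t * θ) ≤ 2 * (t * ⟪g n, u n - w⟫) := by
        have := mul_le_mul_of_nonneg_left hsub htnn
        linarith
      have hchain : a (n + 1) ≤ a n - (2 * L - L ^ 2) * θ ^ 2 / ‖g n‖ ^ 2 := by
        have : a (n + 1) ≤ a n - 2 * (t * θ) + t ^ 2 * ‖g n‖ ^ 2 := by
          calc a (n + 1) ≤ ‖u n - t • g n - w‖ ^ 2 := hstep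
          _ = a n - 2 * (t * ⟪g n, u n - w⟫) + t ^ 2 * ‖g n‖ ^ 2 := hexp
          _ ≤ a n - 2 * (t * θ) + t ^ 2 * ‖g n‖ ^ 2 := by linarith
        rw [h2t, ht2] at this
        have heq : a n - 2 * L * θ ^ 2 / ‖g n‖ ^ 2 + L ^ 2 * θ ^ 2 / ‖g n‖ ^ 2
            = a n - (2 * L - L ^ 2) * θ ^ 2 / ‖g n‖ ^ 2 := by
          field_simp
          ring
        linarith [heq ▸ this]
      have hfrac : c * θ ^ 2 ≤ (2 * L - L ^ 2) * θ ^ 2 / ‖g n‖ ^ 2 := by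
        rw [hc, div_mul_eq_mul_div]
        apply div_le_div₀
        · apply mul_nonneg _ (sq_nonneg θ)
          nlinarith
        · apply mul_le_mul_of_nonneg_right _ (sq_nonneg θ)
          nlinarith
        · positivity
        · exact hgD
      linarith
  have hanonneg : ∀ n, 0 ≤ a n := fun n => sq_nonneg _
  have hsummable : Summable (fun n => c * (Θ n (u n)) ^ 2) := by
    apply summable_of_sum_range_le (c := a 0)
    · intro n
      positivity
    · intro N
      calc ∑ i ∈ Finset.range N, c * (Θ i (u i)) ^ 2
          ≤ ∑ i ∈ Finset.range N, (a i - a (i + 1)) :=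
            Finset.sum_le_sum fun i _ => key i
        _ = a 0 - a N := Finset.sum_range_sub' a N
        _ ≤ a 0 := by linarith [hanonneg N]
  have h0 : Tendsto (fun n => c * (Θ n (u n)) ^ 2) atTop (𝓝 0) :=
    hsummable.tendsto_atTop_zero
  have hsq : Tendsto (fun n => (Θ n (u n)) ^ 2) atTop (𝓝 0) := by
    have h1 := h0.const_mul c⁻¹
    rw [mul_zero] at h1
    refine h1.congr fun n => ?_
    rw [← mul_assoc, inv_mul_cancel₀ hcpos.ne', one_mul]
  have hsqrt : Tendsto (fun n => Real.sqrt ((Θ n (u n)) ^ 2)) atTop (𝓝 0) := by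
    have := (Real.continuous_sqrt.tendsto 0).comp hsq
    simpa [Function.comp_def] using this
  exact hsqrt.congr fun n => Real.sqrt_sq (hΘnn n (u n))
end
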